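/- Let p : ℤ → ℤ be a polynomial with positive leading coefficient and degree t ≥ 2. Then there exist N ∈ ℕ and γ > 0 such that for all integers n > N and all 1 ≤ k < n, p(n) − p(k) ≥ γ (n + (n−k)²). -/
import Mathlib

open Polynomial Filter

theorem stmt_1 (p : Polynomial ℤ) (hdeg : 2 ≤ p.natDegree) (hlead : 0 < p.leadingCoeff) :
    ∃ (N : ℕ) (γ : ℝ), 0 < γ ∧ ∀ n k : ℤ, (N : ℤ) < n → 1 ≤ k → k < n →
      γ * ((n : ℝ) + ((n - k : ℤ) : ℝ) ^ 2) ≤ ((p.eval n - p.eval k : ℤ) : ℝ) := by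
  set t := p.natDegree with ht
  set q : ℤ[X] := C 2 * p - X ^ 2 with hq
  have hpt : 1 ≤ p.coeff t := hlead
  have hqt : 0 < q.coeff t := by
    rw [hq]
    simp only [coeff_sub, coeff_C_mul, coeff_X_pow]
    rcases eq_or_ne t 2 with h | h
    · rw [if_pos h]; omega
    · rw [if_neg h]; omega
  have hqhi : ∀ i, t < i → q.coeff i = 0 := by
    intro i hi
    rw [hq]
    simp only [coeff_sub, coeff_C_mul, coeff_X_pow]
    rw [p.coeff_eq_zero_of_natDegree_lt hi, if_neg (by omega)]
    ring
  have hqeval : ∀ x : ℤ, q.eval x = 2 * p.eval x - x ^ 2 := by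
    intro x; simp [hq]
  have hqdeg : q.natDegree = t :=
    le_antisymm (natDegree_le_iff_coeff_eq_zero.mpr fun m hm => hqhi m hm)
      (le_natDegree_of_ne_zero hqt.ne')
  set Q : ℝ[X] := q.map (Int.castRingHom ℝ) with hQ
  have hQc : ∀ i, Q.coeff i = (q.coeff i : ℝ) := fun i => coeff_map _ i
  have hQeval : ∀ x : ℤ, Q.eval (x : ℝ) = ((q.eval x : ℤ) : ℝ) := by
    intro x
    rw [hQ, eval_map]
    exact eval₂_at_apply (Int.castRingHom ℝ) x
  have hQdeg : Q.natDegree = t := by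
    rw [hQ, natDegree_map_eq_of_injective Int.cast_injective, hqdeg]
  set D : ℝ[X] := derivative Q with hD
  have hDt : 0 < D.coeff (t - 1) := by
    rw [hD, coeff_derivative, hQc]
    have h1 : t - 1 + 1 = t := by omega
    rw [h1]
    have : (0 : ℝ) < (q.coeff t : ℝ) := by exact_mod_cast hqt
    positivity
  have hDhi : ∀ i, t - 1 < i → D.coeff i = 0 := by
    intro i hi
    rw [hD, coeff_derivative, hQc, hqhi (i + 1) (by omega)]
    simp
  have hDdeg : D.natDegree = t - 1 :=
    le_antisymm (natDegree_le_iff_coeff_eq_zero.mpr fun m hm => hDhi m hm)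
      (le_natDegree_of_ne_zero hDt.ne')
  have hDlead : 0 < D.leadingCoeff := by rwa [leadingCoeff, hDdeg]
  have hDdegpos : 0 < D.degree := by
    rw [degree_eq_natDegree (fun h => by simp [h] at hDlead), hDdeg]
    exact_mod_cast by omega
  have htend : Tendsto (fun x => D.eval x) atTop atTop :=
    D.tendsto_atTop_of_leadingCoeff_nonneg hDdegpos hDlead.le
  obtain ⟨M, hM⟩ := eventually_atTop.mp (htend.eventually_ge_atTop 1)
  have hmono : StrictMonoOn (fun x => Q.eval x) (Set.Ici M) := by
    apply strictMonoOn_of_deriv_pos (convex_Ici M)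
      (Q.continuous.continuousOn)
    intro x hx
    rw [interior_Ici] at hx
    rw [Polynomial.deriv]
    have := hM x hx.le
    linarith
  set m : ℤ := max ⌈M⌉ 1 with hm
  have hm1 : 1 ≤ m := le_max_right _ _
  have hmM : M ≤ (m : ℝ) := le_trans (Int.le_ceil M) (by exact_mod_cast le_max_left _ _)
  have H : ∀ a b : ℤ, m ≤ a → a ≤ b → 2 * p.eval a - a ^ 2 ≤ 2 * p.eval b - b ^ 2 := by
    intro a b ha hab
    have haM : M ≤ (a : ℝ) := le_trans hmM (by exact_mod_cast ha)
    have hbM : M ≤ (b : ℝ) := le_trans haM (by exact_mod_cast hab)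
    have h1 : Q.eval (a : ℝ) ≤ Q.eval (b : ℝ) :=
      hmono.monotoneOn haM hbM (by exact_mod_cast hab)
    rw [hQeval, hQeval, hqeval, hqeval] at h1
    exact_mod_cast h1
  set Cm : ℤ := (Finset.Icc 1 m).sup' ⟨1, by simp [hm1]⟩ p.eval with hCm
  have hC : ∀ x : ℤ, 1 ≤ x → x ≤ m → p.eval x ≤ Cm := by
    intro x h1 h2
    exact Finset.le_sup' p.eval (Finset.mem_Icc.mpr ⟨h1, h2⟩)
  set B : ℤ := 2 * m ^ 2 + 4 * Cm - 4 * p.eval m with hB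
  refine ⟨(max m B).toNat, 1 / 4, by norm_num, ?_⟩
  intro n k hn hk1 hkn
  have hcast : ((max m B).toNat : ℤ) = max m B := Int.toNat_of_nonneg (le_trans (le_trans zero_le_one hm1) (le_max_left _ _))
  rw [hcast] at hn
  have hnm : m < n := lt_of_le_of_lt (le_max_left _ _) hn
  have hnB : B < n := lt_of_le_of_lt (le_max_right _ _) hn
  have key : n + (n - k) ^ 2 ≤ 4 * (p.eval n - p.eval k) := by
    rcases le_or_gt m k with hmk | hkm
    · have h := H k n hmk hkn.le
      nlinarith [mul_nonneg (show (0:ℤ) ≤ n - k - 1 by omega) (show (0:ℤ) ≤ n + 3 * k by omega)]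
    · have h := H m n le_rfl hnm.le
      have hpk := hC k hk1 hkm.le
      have hsq : (n - k) ^ 2 ≤ (n - 1) ^ 2 := by nlinarith [hk1, hkn]
      nlinarith [sq_nonneg n]
  have key' : ((n : ℝ) + ((n : ℝ) - (k : ℝ)) ^ 2) ≤ 4 * (((p.eval n : ℤ) : ℝ) - ((p.eval k : ℤ) : ℝ)) := by
    exact_mod_cast key
  push_cast
  linarith
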